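/- Let D be a minimally rich domain of linear orders on a finite set A. If every unanimous and strategy-proof scf f: D^2 → A is dictatorial, then for every n ≥ 2, every unanimous and strategy-proof scf f: D^n → A is dictatorial. -/
import Mathlib


open Relation

/-- A preference is a ranking: a bijection from alternatives to ranks (0 = best). -/
abbrev Pref (A : Type*) [Fintype A] := A ≃ Fin (Fintype.card A)

namespace Pref

variable {A : Type*} [Fintype A]

/-- The rank (as a natural number, 0 = best) of alternative `a` in preference `P`. -/
def rk (P : Pref A) (a : A) : ℕ := (P a : ℕ)

/-- The top-ranked alternative of `P`. -/
noncomputable def top [Nonempty A] (P : Pref A) : A := P.symm ⟨0, Fintype.card_pos⟩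

/-- `a` is strictly preferred to `b` under `P`. -/
def SPrefers (P : Pref A) (a b : A) : Prop := rk P a < rk P b

/-- Two preferences are adjacent if they differ by one swap of consecutively
ranked alternatives. -/
def Adjacent (P P' : Pref A) : Prop :=
  ∃ a b : A, rk P a = rk P b + 1 ∧ rk P' a = rk P b ∧ rk P' b = rk P a ∧
    ∀ c : A, c ≠ a → c ≠ b → rk P c = rk P' c

end Pref

open Pref

variable {A : Type*} [Fintype A] [Nonempty A]

/-- One step between members of the domain `D` along adjacent preferences. -/
def StepRel (D : Set (Pref A)) (P Q : Pref A) : Prop := P ∈ D ∧ Q ∈ D ∧ Adjacent P Q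

/-- The domain `D` is connected: any two members are joined by a path of
adjacent preferences inside `D`. -/
def DConnected (D : Set (Pref A)) : Prop :=
  ∀ P ∈ D, ∀ Q ∈ D, ReflTransGen (StepRel D) P Q

/-- One step inside `D` along adjacent preferences keeping the same top. -/
def TStepRel (D : Set (Pref A)) (P Q : Pref A) : Prop :=
  StepRel D P Q ∧ Pref.top P = Pref.top Q

/-- The top-connected closure of `P` in `D`. -/
def TCC (D : Set (Pref A)) (P : Pref A) : Set (Pref A) :=
  {Q | ReflTransGen (TStepRel D) P Q}

/-- Neighbours of a subset `S` inside the domain `D`. -/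
def Nbr (D S : Set (Pref A)) : Set (Pref A) :=
  {Q | Q ∈ D ∧ Q ∉ S ∧ ∃ P ∈ S, Adjacent P Q}

/-- `D` is connected with two distinct neighbours. -/
def CDN (D : Set (Pref A)) : Prop :=
  DConnected D ∧
    ∀ P ∈ D, ∃ Q ∈ Nbr D (TCC D P), ∃ R ∈ Nbr D (TCC D P), Pref.top Q ≠ Pref.top R

/-- Every alternative is top-ranked in some preference of `D`. -/
def MinimallyRich (D : Set (Pref A)) : Prop := ∀ a : A, ∃ P ∈ D, Pref.top P = a

/-- The edge relation of the induced graph `G(D)` on alternatives. -/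
def EdgeD (D : Set (Pref A)) (a b : A) : Prop :=
  ∃ P ∈ D, ∃ P' ∈ D, Adjacent P P' ∧
    Pref.top P = a ∧ Pref.top P' = b ∧ rk P b = 1 ∧ rk P' a = 1

/-- `v 0, v 1, …, v (k-1)` is a path in the induced graph `G(D)`. -/
def IsPathD (D : Set (Pref A)) (k : ℕ) (v : ℕ → A) : Prop :=
  (∀ i j, i < k → j < k → v i = v j → i = j) ∧
    ∀ i, i + 1 < k → EdgeD D (v i) (v (i + 1))

/-- Connected component of `P` in `D`. -/
def Component (D : Set (Pref A)) (P : Pref A) : Set (Pref A) :=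
  {Q | Q ∈ D ∧ ReflTransGen (StepRel D) P Q}

section SCF

variable {n : ℕ} (D : Set (Pref A))

/-- Unanimity. -/
def Unanimous (f : (Fin n → D) → A) : Prop :=
  ∀ (P : Fin n → D) (a : A), (∀ i, Pref.top (P i : Pref A) = a) → f P = a

/-- Local strategy-proofness. -/
def LocallySP (f : (Fin n → D) → A) : Prop :=
  ∀ (P : Fin n → D) (i : Fin n) (Q : D), Adjacent (P i : Pref A) (Q : Pref A) →
    ¬ SPrefers (P i : Pref A) (f (Function.update P i Q)) (f P)

/-- (Global) strategy-proofness. -/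
def StrategyProof (f : (Fin n → D) → A) : Prop :=
  ∀ (P : Fin n → D) (i : Fin n) (Q : D),
    ¬ SPrefers (P i : Pref A) (f (Function.update P i Q)) (f P)

/-- Tops-onlyness. -/
def TopsOnly (f : (Fin n → D) → A) : Prop :=
  ∀ P P' : Fin n → D,
    (∀ i, Pref.top (P i : Pref A) = Pref.top (P' i : Pref A)) → f P = f P'

/-- Dictatorship. -/
def Dictatorial (f : (Fin n → D) → A) : Prop :=
  ∃ i : Fin n, ∀ P : Fin n → D, f P = Pref.top (P i : Pref A)

/-- Voter `i` is decisive over `a`. -/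
def Decisive (f : (Fin n → D) → A) (i : Fin n) (a : A) : Prop :=
  ∀ P : Fin n → D, Pref.top (P i : Pref A) = a → f P = a

end SCF


namespace Stmt18Aux

variable {A : Type*} [Fintype A] [Nonempty A]

omit [Nonempty A] in
lemma rk_inj (P : Pref A) {a b : A} (h : rk P a = rk P b) : a = b :=
  P.injective (Fin.val_injective h)

lemma rk_top (P : Pref A) : rk P (Pref.top P) = 0 := by
  simp [rk, Pref.top]

lemma eq_top_of_rk_zero (P : Pref A) {a : A} (h : rk P a = 0) : a = Pref.top P :=
  rk_inj P (h.trans (rk_top P).symm)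

omit [Nonempty A] in
lemma sp_rank {n : ℕ} {D : Set (Pref A)} {f : (Fin n → D) → A}
    (hf : StrategyProof D f) (P : Fin n → D) (i : Fin n) (Q : D) :
    rk (P i : Pref A) (f P) ≤ rk (P i : Pref A) (f (Function.update P i Q)) :=
  Nat.not_lt.mp (hf P i Q)

end Stmt18Aux

open Stmt18Aux
/-- Proposition 3 (Aswal–Chatterji–Sen): if every unanimous strategy-proof
two-voter scf on a minimally rich domain is dictatorial, the same holds for any
number `n ≥ 2` of voters. -/
theorem stmt18 {A : Type*} [Fintype A] [Nonempty A] (hA : 3 ≤ Fintype.card A)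
    (D : Set (Pref A)) (hmr : MinimallyRich D)
    (h2 : ∀ f : (Fin 2 → D) → A,
      Unanimous D f → StrategyProof D f → Dictatorial D f) :
    ∀ n : ℕ, 2 ≤ n → ∀ f : (Fin n → D) → A,
      Unanimous D f → StrategyProof D f → Dictatorial D f := by

  intro n hn
  induction n, hn using Nat.le_induction with
  | base => exact h2
  | succ n hn IH =>
    intro f hu hsp
    haveI : NeZero n := ⟨by omega⟩
    have one_eq : (1 : Fin (n + 1)) = (0 : Fin n).succ := by simp [Fin.ext_iff]
    -- the expansion cloning voter 0
    set e : (Fin n → D) → (Fin (n + 1) → D) := fun R => Fin.cons (R 0) R with he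
    have e_zero : ∀ R : Fin n → D, e R 0 = R 0 := fun R => rfl
    have e_succ : ∀ (R : Fin n → D) (i : Fin n), e R i.succ = R i := fun R i => by
      simp [he]
    have e_one : ∀ R : Fin n → D, e R 1 = R 0 := fun R => by rw [one_eq, e_succ]
    set g : (Fin n → D) → A := fun R => f (e R) with hg
    have hgu : Unanimous D g := by
      intro R a hR
      apply hu
      intro i
      induction i using Fin.cases with
      | zero => rw [e_zero]; exact hR 0
      | succ i => rw [e_succ]; exact hR i
    have hgsp : StrategyProof D g := by
      intro R i Q
      by_cases hi0 : i = 0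
      · subst hi0
        have key : e (Function.update R 0 Q) =
            Function.update (Function.update (e R) 0 Q) 1 Q := by
          show (Fin.cons ((Function.update R 0 Q) 0) (Function.update R 0 Q) : Fin (n+1) → D)
              = Function.update (Function.update (Fin.cons (R 0) R) 0 Q) 1 Q
          rw [Function.update_self, Fin.update_cons_zero, one_eq, ← Fin.cons_update]
        simp only [SPrefers, not_lt]
        show rk (R 0 : Pref A) (f (e R)) ≤ rk (R 0 : Pref A) (f (e (Function.update R 0 Q)))
        have i1 := sp_rank hsp (e R) 0 Q
        rw [e_zero] at i1
        have i2 := sp_rank hsp (Function.update (e R) 0 Q) 1 Q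
        rw [Function.update_of_ne (show (1 : Fin (n+1)) ≠ 0 by rw [one_eq]; exact Fin.succ_ne_zero _), e_one] at i2
        rw [key]
        exact le_trans i1 i2
      · have key : e (Function.update R i Q) = Function.update (e R) i.succ Q := by
          show (Fin.cons ((Function.update R i Q) 0) (Function.update R i Q) : Fin (n+1) → D)
              = Function.update (Fin.cons (R 0) R) i.succ Q
          rw [Function.update_of_ne (Ne.symm hi0), Fin.cons_update]
        have := hsp (e R) i.succ Q
        rw [e_succ] at this
        simpa only [SPrefers, not_lt, hg, key] using this
    obtain ⟨j, hj⟩ := IH g hgu hgsp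
    by_cases hj0 : j = 0
    · -- merged dictator case
      subst hj0
      have fact2 : ∀ W : Fin (n+1) → D, W 0 = W 1 → f W = Pref.top ((W 0 : D) : Pref A) := by
        intro W hW
        have hWe : e (fun i => W i.succ) = W := by
          funext m
          induction m using Fin.cases with
          | zero => simp only [he, Fin.cons_zero]; show W (Fin.succ 0) = W 0; rw [← one_eq, ← hW]
          | succ m => simp only [he, Fin.cons_succ]
        have := hj (fun i => W i.succ)
        simp only [hg] at this
        rw [hWe] at this
        rw [this]
        show Pref.top ((W (Fin.succ 0) : D) : Pref A) = _
        rw [← one_eq, ← hW]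
      -- two-voter rule with fixed tail t
      set F : (Fin (n+1) → D) → (Fin 2 → D) → A :=
        fun t v => f (Function.update (Function.update t 0 (v 0)) 1 (v 1)) with hF
      have hnz1 : (1 : Fin (n+1)) ≠ 0 := by rw [one_eq]; exact Fin.succ_ne_zero _
      have W0 : ∀ (t : Fin (n+1) → D) (v : Fin 2 → D),
          Function.update (Function.update t 0 (v 0)) 1 (v 1) 0 = v 0 := fun t v => by
        rw [Function.update_of_ne (Ne.symm hnz1), Function.update_self]
      have W1 : ∀ (t : Fin (n+1) → D) (v : Fin 2 → D),
          Function.update (Function.update t 0 (v 0)) 1 (v 1) 1 = v 1 := fun t v => by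
        rw [Function.update_self]
      have Wup0 : ∀ (t : Fin (n+1) → D) (v : Fin 2 → D) (Q : D),
          Function.update (Function.update (Function.update t 0 (v 0)) 1 (v 1)) 0 Q
            = Function.update (Function.update t 0 Q) 1 (v 1) := fun t v Q => by
        rw [Function.update_comm hnz1, Function.update_idem]
      have Wup1 : ∀ (t : Fin (n+1) → D) (v : Fin 2 → D) (Q : D),
          Function.update (Function.update (Function.update t 0 (v 0)) 1 (v 1)) 1 Q
            = Function.update (Function.update t 0 (v 0)) 1 Q := fun t v Q => by
        rw [Function.update_idem]
      have Fsp : ∀ t, StrategyProof D (F t) := by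
        intro t v i Q
        induction i using Fin.cases with
        | zero =>
          have e1 : F t (Function.update v 0 Q)
              = f (Function.update (Function.update (Function.update t 0 (v 0)) 1 (v 1)) 0 Q) := by
            simp only [hF, Function.update_self,
              Function.update_of_ne (show (1 : Fin 2) ≠ 0 by decide), Wup0]
          have := hsp (Function.update (Function.update t 0 (v 0)) 1 (v 1)) 0 Q
          rw [W0] at this
          rw [← e1] at this
          simpa only [hF] using this
        | succ m =>
          have hm : m = 0 := Subsingleton.elim m 0
          subst hm
          rw [Fin.succ_zero_eq_one]
          have e1 : F t (Function.update v 1 Q)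
              = f (Function.update (Function.update (Function.update t 0 (v 0)) 1 (v 1)) 1 Q) := by
            simp only [hF, Function.update_self,
              Function.update_of_ne (show (0 : Fin 2) ≠ 1 by decide), Wup1]
          have := hsp (Function.update (Function.update t 0 (v 0)) 1 (v 1)) 1 Q
          rw [W1] at this
          rw [← e1] at this
          simpa only [hF] using this
      have Fun : ∀ t, Unanimous D (F t) := by
        intro t v a hv
        have hW' : f (Function.update (Function.update (Function.update t 0 (v 0)) 1 (v 1)) 0 (v 1)) = a := by
          rw [Wup0]
          have h01' : Function.update (Function.update t 0 (v 1 : D)) 1 (v 1) 0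
              = (v 1 : D) := by
            rw [Function.update_of_ne (Ne.symm hnz1), Function.update_self]
          have := fact2 (Function.update (Function.update t 0 (v 1)) 1 (v 1)) (by
            rw [h01', Function.update_self])
          rw [h01'] at this
          rw [this, hv 1]
        have key := sp_rank hsp (Function.update (Function.update t 0 (v 0)) 1 (v 1)) 0 (v 1)
        rw [W0, hW'] at key
        have hr0 : rk ((v 0 : D) : Pref A) a = 0 := by
          rw [← hv 0]; exact rk_top _
        rw [hr0, Nat.le_zero] at key
        have := eq_top_of_rk_zero ((v 0 : D) : Pref A) key
        simp only [hF]
        rw [this, hv 0]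
      have Dct : ∀ t : Fin (n+1) → D, ∃ d : Fin 2, ∀ v, F t v = Pref.top ((v d : D) : Pref A) :=
        fun t => h2 (F t) (Fun t) (Fsp t)
      -- two alternatives with distinct tops
      obtain ⟨a, b, hab⟩ := Fintype.exists_pair_of_one_lt_card (by omega : 1 < Fintype.card A)
      obtain ⟨Pa, hPaD, hPa⟩ := hmr a
      obtain ⟨Qb, hQbD, hQb⟩ := hmr b
      set pa : D := ⟨Pa, hPaD⟩ with hpa
      set qb : D := ⟨Qb, hQbD⟩ with hqb
      -- contradiction lemma
      have contra : ∀ (t t' : Fin (n+1) → D) (k : Fin (n+1)) (R : D), k ≠ 0 → k ≠ 1 →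
          t' = Function.update t k R →
          (∀ v, F t v = Pref.top ((v 0 : D) : Pref A)) →
          (∀ v, F t' v = Pref.top ((v 1 : D) : Pref A)) → False := by
        intro t t' k R hk0 hk1 ht' h0 h1
        have swap : ∀ (v : Fin 2 → D),
            Function.update (Function.update t' 0 (v 0)) 1 (v 1)
              = Function.update (Function.update (Function.update t 0 (v 0)) 1 (v 1)) k R := by
          intro v
          rw [ht', Function.update_comm hk0, Function.update_comm hk1]
        have hUk : ∀ (v : Fin 2 → D),
            Function.update (Function.update t 0 (v 0)) 1 (v 1) k = t k := by
          intro v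
          rw [Function.update_of_ne hk1, Function.update_of_ne hk0]
        have ineq : ∀ (v : Fin 2 → D),
            rk ((t k : D) : Pref A) (F t v) ≤ rk ((t k : D) : Pref A) (F t' v) := by
          intro v
          have := sp_rank hsp (Function.update (Function.update t 0 (v 0)) 1 (v 1)) k R
          rw [hUk] at this
          simp only [hF]
          rw [swap v]
          exact this
        have i1 := ineq ![pa, qb]
        have i2 := ineq ![qb, pa]
        rw [h0, h1] at i1
        rw [h0, h1] at i2
        simp only [Matrix.cons_val_zero, Matrix.cons_val_one, Matrix.head_cons] at i1 i2
        have hpat : Pref.top ((pa : D) : Pref A) = a := hPa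
        have hqbt : Pref.top ((qb : D) : Pref A) = b := hQb
        rw [hpat, hqbt] at i1 i2
        exact hab (rk_inj ((t k : D) : Pref A) (le_antisymm i1 i2))
      -- the dictating coordinate does not depend on the tail
      have step : ∀ (d : Fin 2) (t : Fin (n+1) → D) (k : Fin (n+1)) (R : D),
          (∀ v, F t v = Pref.top ((v d : D) : Pref A)) →
          (∀ v, F (Function.update t k R) v = Pref.top ((v d : D) : Pref A)) := by
        intro d t k R hd
        by_cases hk0 : k = 0
        · subst hk0
          intro v
          rw [← hd v]
          simp only [hF]
          rw [Function.update_idem]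
        · by_cases hk1 : k = 1
          · subst hk1
            intro v
            rw [← hd v]
            simp only [hF]
            rw [Function.update_comm hnz1, Function.update_idem, ← Function.update_comm hnz1]
          · obtain ⟨d', hd'⟩ := Dct (Function.update t k R)
            by_cases hdd : d' = d
            · subst hdd; exact hd'
            · exfalso
              have hcases : (d = 0 ∧ d' = 1) ∨ (d = 1 ∧ d' = 0) := by
                have h1 := d.isLt
                have h2 := d'.isLt
                have hne : d'.val ≠ d.val := fun h => hdd (Fin.val_injective h)
                have : (d.val = 0 ∧ d'.val = 1) ∨ (d.val = 1 ∧ d'.val = 0) := by omega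
                rcases this with ⟨u, w⟩ | ⟨u, w⟩
                · exact Or.inl ⟨Fin.ext u, Fin.ext w⟩
                · exact Or.inr ⟨Fin.ext u, Fin.ext w⟩
              rcases hcases with ⟨hd0, hd1⟩ | ⟨hd0, hd1⟩
              · exact contra t (Function.update t k R) k R hk0 hk1 rfl
                  (hd0 ▸ hd) (hd1 ▸ hd')
              · have hback : t = Function.update (Function.update t k R) k (t k) := by
                  rw [Function.update_idem, Function.update_eq_self]
                exact contra (Function.update t k R) t k (t k) hk0 hk1 hback
                  (hd1 ▸ hd') (hd0 ▸ hd)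
      have transfer : ∀ (d : Fin 2) (s : Finset (Fin (n+1))) (t t' : Fin (n+1) → D),
          (∀ i ∉ s, t i = t' i) →
          (∀ v, F t v = Pref.top ((v d : D) : Pref A)) →
          (∀ v, F t' v = Pref.top ((v d : D) : Pref A)) := by
        intro d s
        induction s using Finset.induction_on with
        | empty =>
          intro t t' hdiff hd
          have : t = t' := funext fun i => hdiff i (Finset.notMem_empty i)
          rwa [← this]
        | @insert c s hc IHs =>
          intro t t' hdiff hd
          have hmid : ∀ i ∉ s, t i = Function.update t' c (t c) i := by
            intro i his
            by_cases hic : i = c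
            · subst hic; rw [Function.update_self]
            · rw [Function.update_of_ne hic]
              exact hdiff i (by simp [hic, his])
          have hd2 := IHs t (Function.update t' c (t c)) hmid hd
          have : t' = Function.update (Function.update t' c (t c)) c (t' c) := by
            rw [Function.update_idem, Function.update_eq_self]
          rw [this]
          exact step d _ c (t' c) hd2
      obtain ⟨d, hd⟩ := Dct (fun _ => pa)
      have hall : ∀ (t : Fin (n+1) → D) (v : Fin 2 → D),
          F t v = Pref.top ((v d : D) : Pref A) := by
        intro t
        exact transfer d Finset.univ (fun _ => pa) t (by simp) hd
      have hself : ∀ P : Fin (n+1) → D, F P ![P 0, P 1] = f P := by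
        intro P
        simp only [hF, Matrix.cons_val_zero, Matrix.cons_val_one, Matrix.head_cons]
        rw [Function.update_eq_self, Function.update_eq_self]
      refine ⟨if d = 0 then 0 else 1, ?_⟩
      intro P
      have := hall P ![P 0, P 1]
      rw [hself] at this
      rw [this]
      fin_cases d
      · simp only [Matrix.cons_val_zero]
        norm_num
      · simp only [Matrix.cons_val_one, Matrix.head_cons]
        norm_num
    · -- real dictator case: sandwich
      refine ⟨j.succ, ?_⟩
      intro P
      have hsj1 : j.succ ≠ 1 := by
        rw [one_eq]; exact fun h => hj0 (Fin.succ_injective _ h)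
      set X := Function.update P 0 (P 1) with hX
      set Z := Function.update P 1 (P 0) with hZ
      have hfX : f X = Pref.top ((P j.succ : D) : Pref A) := by
        have hXe : e (fun i => P i.succ) = X := by
          funext m
          induction m using Fin.cases with
          | zero =>
            simp only [he, Fin.cons_zero]
            rw [hX, Function.update_self]
            show P (Fin.succ 0) = P 1; rw [← one_eq]
          | succ m =>
            simp only [he, Fin.cons_succ]
            rw [hX, Function.update_of_ne (Fin.succ_ne_zero m)]
        have := hj (fun i => P i.succ)
        simp only [hg] at this; rw [hXe] at this
        exact this
      have hfZ : f Z = Pref.top ((P j.succ : D) : Pref A) := by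
        have hZe : e (fun i => Z i.succ) = Z := by
          funext m
          induction m using Fin.cases with
          | zero =>
            simp only [he, Fin.cons_zero]
            show Z (Fin.succ 0) = Z 0
            rw [← one_eq, hZ, Function.update_self,
              Function.update_of_ne (Ne.symm (show (1 : Fin (n+1)) ≠ 0 by rw [one_eq]; exact Fin.succ_ne_zero _))]
          | succ m => simp only [he, Fin.cons_succ]
        have := hj (fun i => Z i.succ)
        simp only [hg] at this; rw [hZe] at this
        rw [this]
        show Pref.top ((Z j.succ : D) : Pref A) = _
        rw [hZ, Function.update_of_ne hsj1]
      have i1 := sp_rank hsp P 0 (P 1)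
      rw [← hX] at i1
      have i2 := sp_rank hsp Z 1 (P 1)
      have hZ1 : Z 1 = P 0 := by rw [hZ, Function.update_self]
      have hZup : Function.update Z 1 (P 1) = P := by
        rw [hZ, Function.update_idem, Function.update_eq_self]
      rw [hZ1, hZup] at i2
      rw [hfZ] at i2
      rw [hfX] at i1
      have := le_antisymm i2 i1
      rw [hfX] at *
      exact (rk_inj ((P 0 : D) : Pref A) this).symm
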